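/- arXiv:1005.5469 — 5 statements merged into one kernel-verified Lean document; each statement's English description precedes it below -/
import Mathlib

section
/- Given positive integers d_1, ..., d_n and a prime p ≥ 2n+1 with p not dividing any d_i, there exist 2n integers x_1, ..., x_n, y_1, ..., y_n, all pairwise distinct modulo p, such that x_i + d_i ≡ y_i (mod p) for every i. -/
/-!
The `2n` residues `x i`, `x i + d i` are pairwise distinct iff `x` is not a zero of
`P = ∏_{i ≠ j} (X i - X j + d i) (X i - X j + c i j)`, where `c i j` is `0` for `i < j` and
`d i - d j` for `i > j`. The top homogeneous part of this product of `2n(n-1)` linear factors is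
`∏_{i ≠ j} (X i - X j) ^ 2`, and by Dyson's constant term identity its coefficient of
`∏ i, X i ^ (2n - 2)` is the multinomial coefficient `(2n)! / 2 ^ n`, a unit mod `p` since `p > 2n`.
As `2n - 2 < p`, Alon's Combinatorial Nullstellensatz gives a point where `P` does not vanish.

Dyson's identity is proved following Good: multiplying by the Lagrange interpolation identity
`∑ k, ∏_{j ≠ k} X j / (X j - X k) = 1` shows that the coefficients satisfy the recursion of the
multinomial coefficients, and an exponent `a k = 0` lets the variable `X k` be dropped.
-/

open MvPolynomial Finset
open scoped Nat

theorem Finset.sum_update_sub_one {ι : Type*} [DecidableEq ι] {s : Finset ι} {f : ι → ℕ} {k : ι}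
    (hk : k ∈ s) (hfk : f k ≠ 0) :
    ∑ i ∈ s, Function.update f k (f k - 1) i = ∑ i ∈ s, f i - 1 := by
  rw [sum_update_of_mem hk, sdiff_singleton_eq_erase, ← add_sum_erase s f hk]
  omega

theorem Nat.prod_factorial_eq_mul_prod_factorial_update {ι : Type*} [DecidableEq ι]
    {s : Finset ι} {f : ι → ℕ} {k : ι} (hk : k ∈ s) (hfk : f k ≠ 0) :
    ∏ i ∈ s, (f i)! = f k * ∏ i ∈ s, (Function.update f k (f k - 1) i)! := by
  rw [← mul_prod_erase s _ hk, ← mul_prod_erase s _ hk, Function.update_self, ← mul_assoc,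
    Nat.mul_factorial_pred hfk]
  congr 1
  exact prod_congr rfl fun i hi => by rw [Function.update_of_ne (ne_of_mem_erase hi)]

theorem Nat.multinomial_eq_sum_multinomial_update {ι : Type*} [DecidableEq ι]
    {s : Finset ι} {f : ι → ℕ} (hs : s.Nonempty) (hf : ∀ i ∈ s, f i ≠ 0) :
    multinomial s f = ∑ k ∈ s, multinomial s (Function.update f k (f k - 1)) := by
  have hpos : ∑ i ∈ s, f i ≠ 0 := by
    obtain ⟨k, hk⟩ := hs
    exact fun h => hf k hk (sum_eq_zero_iff.1 h k hk)
  apply Nat.eq_of_mul_eq_mul_left (prod_factorial_pos s f)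
  rw [multinomial_spec, mul_sum, ← Nat.mul_factorial_pred hpos, sum_mul]
  refine sum_congr rfl fun k hk => ?_
  rw [prod_factorial_eq_mul_prod_factorial_update hk (hf k hk), mul_assoc, multinomial_spec,
    Finset.sum_update_sub_one hk (hf k hk)]

theorem Lagrange.sum_prod_div_sub_eq_one {F ι : Type*} [Field F] [DecidableEq ι]
    {s : Finset ι} {v : ι → F} (hvs : Set.InjOn v s) (hs : s.Nonempty) :
    ∑ k ∈ s, ∏ j ∈ s.erase k, v j / (v j - v k) = 1 := by
  have := congrArg (Polynomial.eval 0) (Lagrange.sum_basis hvs hs)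
  rw [Polynomial.eval_finsetSum, Polynomial.eval_one] at this
  rw [← this]
  refine sum_congr rfl fun k hk => ?_
  rw [Lagrange.basis, Polynomial.eval_prod]
  refine prod_congr rfl fun j hj => ?_
  have hne : v j - v k ≠ 0 :=
    sub_ne_zero.2 fun h => ne_of_mem_erase hj (hvs (mem_of_mem_erase hj) hk h)
  rw [Lagrange.basisDivisor, ← neg_sub (v j) (v k)]
  simp only [Polynomial.eval_mul, Polynomial.eval_C, Polynomial.eval_sub, Polynomial.eval_X]
  field_simp
  ring

theorem Finsupp.eq_single_of_degree_le {σ : Type*} {v : σ →₀ ℕ} {k : σ} (h : v.degree ≤ v k) :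
    v = single k (v k) := by
  have hsplit := congrArg degree (single_add_erase k v)
  rw [map_add, degree_single] at hsplit
  have : (v.erase k).degree = 0 := by omega
  rw [degree_eq_zero_iff] at this
  simpa [this] using (single_add_erase k v).symm

namespace MvPolynomial

section Homogeneous

variable {σ R : Type*} [CommSemiring R]

theorem degree_le_totalDegree {f : MvPolynomial σ R} {d : σ →₀ ℕ} (hd : coeff d f ≠ 0) :
    d.degree ≤ f.totalDegree :=
  le_totalDegree (mem_support_iff.2 hd)

theorem homogeneousComponent_mul_of_totalDegree_le {f g : MvPolynomial σ R} {m n : ℕ}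
    (hf : f.totalDegree ≤ m) (hg : g.totalDegree ≤ n) :
    homogeneousComponent (m + n) (f * g) = homogeneousComponent m f * homogeneousComponent n g := by
  classical
  ext d
  rw [coeff_homogeneousComponent]
  split_ifs with hd
  · rw [coeff_mul, coeff_mul]
    refine sum_congr rfl fun uv huv => ?_
    rw [HasAntidiagonal.mem_antidiagonal] at huv
    rw [coeff_homogeneousComponent, coeff_homogeneousComponent]
    by_cases hu : coeff uv.1 f = 0
    · simp [hu]
    by_cases hv : coeff uv.2 g = 0
    · simp [hv]
    have hu' := (degree_le_totalDegree hu).trans hf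
    have hv' := (degree_le_totalDegree hv).trans hg
    have : uv.1.degree + uv.2.degree = m + n := by rw [← map_add, huv, hd]
    rw [if_pos (by omega), if_pos (by omega)]
  · exact (((homogeneousComponent_isHomogeneous m f).mul
      (homogeneousComponent_isHomogeneous n g)).coeff_eq_zero hd).symm

theorem homogeneousComponent_prod_of_totalDegree_le {ι : Type*} (s : Finset ι)
    (f : ι → MvPolynomial σ R) (n : ι → ℕ) (hf : ∀ i ∈ s, (f i).totalDegree ≤ n i) :
    homogeneousComponent (∑ i ∈ s, n i) (∏ i ∈ s, f i) =
      ∏ i ∈ s, homogeneousComponent (n i) (f i) := by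
  classical
  induction s using Finset.induction_on with
  | empty => simp
  | insert a s ha ih =>
    rw [sum_insert ha, prod_insert ha, prod_insert ha,
      homogeneousComponent_mul_of_totalDegree_le (hf a (mem_insert_self a s)),
      ih fun i hi => hf i (mem_insert_of_mem hi)]
    exact (totalDegree_finsetProd s f).trans
      (sum_le_sum fun i hi => hf i (mem_insert_of_mem hi))

theorem IsHomogeneous.degree_eq {g : MvPolynomial σ R} {n : ℕ} (hg : g.IsHomogeneous n)
    {d : σ →₀ ℕ} (hd : coeff d g ≠ 0) : d.degree = n := by
  rw [Finsupp.degree_eq_weight_one]; exact hg hd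

theorem IsHomogeneous.eq_single_of_le_apply {g : MvPolynomial σ R} {n : ℕ} (hg : g.IsHomogeneous n)
    {d : σ →₀ ℕ} (hd : coeff d g ≠ 0) {k : σ} (hk : n ≤ d k) : d = Finsupp.single k n := by
  have hdeg := hg.degree_eq hd
  have hle := Finsupp.le_degree k d
  rw [Finsupp.eq_single_of_degree_le (by omega : d.degree ≤ d k)]
  congr 1
  omega

theorem IsHomogeneous.coeff_single_eq_eval [DecidableEq σ] {g : MvPolynomial σ R} {n : ℕ}
    (hg : g.IsHomogeneous n) (k : σ) :
    coeff (Finsupp.single k n) g = eval (Pi.single k 1) g := by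
  rw [eval_eq, sum_eq_single (Finsupp.single k n)]
  · rw [prod_eq_one, mul_one]
    intro i hi
    rw [mem_singleton.1 (Finsupp.support_single_subset hi)]
    simp
  · intro d hd hne
    obtain ⟨i, hi, hik⟩ : ∃ i ∈ d.support, i ≠ k := by
      by_contra! h
      refine hne (hg.eq_single_of_le_apply (mem_support_iff.1 hd) ?_)
      rw [← hg.degree_eq (mem_support_iff.1 hd), Finsupp.degree_apply,
        sum_subset (fun i hi => mem_singleton.2 (h i hi))
          (fun i _ hi => Finsupp.notMem_support_iff.1 hi), sum_singleton]
    rw [prod_eq_zero hi (by simp [hik, Finsupp.mem_support_iff.1 hi]), mul_zero]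
  · intro h
    rw [notMem_support_iff.1 h, zero_mul]

theorem coeff_add_single_mul_of_isHomogeneous [DecidableEq σ] {f g : MvPolynomial σ R} {k : σ}
    {n : ℕ} (hf : k ∉ f.vars) (hg : g.IsHomogeneous n) (m : σ →₀ ℕ) :
    coeff (m + Finsupp.single k n) (f * g) = coeff m f * coeff (Finsupp.single k n) g := by
  rw [coeff_mul, sum_eq_single (m, Finsupp.single k n)]
  · rintro ⟨u, v⟩ huv hne
    rw [HasAntidiagonal.mem_antidiagonal] at huv
    dsimp only at huv ⊢
    by_contra h
    have huk : u k = 0 :=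
      mem_support_notMem_vars_zero (mem_support_iff.2 (left_ne_zero_of_mul h)) hf
    have hv : v = Finsupp.single k n := by
      refine hg.eq_single_of_le_apply (right_ne_zero_of_mul h) ?_
      have := congrArg (· k) huv
      simp only [Finsupp.add_apply, huk, Finsupp.single_eq_same] at this
      omega
    subst hv
    exact hne (by rw [add_right_cancel huv])
  · intro h
    simp at h

end Homogeneous

section LinearForm

variable {σ R : Type*} [CommRing R]

theorem totalDegree_X_sub_X_add_C_le (i j : σ) (c : R) : (X i - X j + C c).totalDegree ≤ 1 :=
  (totalDegree_add _ _).trans <|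
    max_le ((isHomogeneous_X R i).sub (isHomogeneous_X R j)).totalDegree_le
      ((totalDegree_C c).trans_le zero_le_one)

theorem homogeneousComponent_one_X_sub_X_add_C (i j : σ) (c : R) :
    homogeneousComponent 1 (X i - X j + C c) = X i - X j := by
  rw [map_add, homogeneousComponent_eq_self ((isHomogeneous_X R i).sub (isHomogeneous_X R j)),
    homogeneousComponent_eq_zero 1 (C c) (by simp), add_zero]

theorem totalDegree_mul_X_sub_X_add_C_le (i j : σ) (c c' : R) :
    ((X i - X j + C c) * (X i - X j + C c')).totalDegree ≤ 2 :=
  (totalDegree_mul _ _).trans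
    (add_le_add (totalDegree_X_sub_X_add_C_le i j c) (totalDegree_X_sub_X_add_C_le i j c'))

theorem homogeneousComponent_two_mul_X_sub_X_add_C (i j : σ) (c c' : R) :
    homogeneousComponent 2 ((X i - X j + C c) * (X i - X j + C c')) = (X i - X j) ^ 2 := by
  rw [sq, homogeneousComponent_mul_of_totalDegree_le (m := 1) (n := 1)
    (totalDegree_X_sub_X_add_C_le i j c) (totalDegree_X_sub_X_add_C_le i j c'),
    homogeneousComponent_one_X_sub_X_add_C, homogeneousComponent_one_X_sub_X_add_C]

end LinearForm

section Dyson

variable {σ : Type*}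

/-- Dyson's Laurent polynomial `∏_{i ≠ j} (1 - X i / X j) ^ a i` times `∏ j, X j ^ (A - a j)`,
`A = ∑ i, a i`: its constant term becomes the coefficient at `dysonExp s a`. -/
noncomputable def dysonPoly (R : Type*) [CommRing R] (s : Finset σ) (a : σ → ℕ) :
    MvPolynomial σ R :=
  ∏ ij ∈ s.offDiag, (X ij.2 - X ij.1) ^ a ij.1

noncomputable def dysonExp (s : Finset σ) (a : σ → ℕ) : σ →₀ ℕ :=
  Finsupp.indicator s fun j _ => ∑ i ∈ s, a i - a j

variable {R : Type*} [CommRing R]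

theorem dysonExp_apply [DecidableEq σ] (s : Finset σ) (a : σ → ℕ) (j : σ) :
    dysonExp s a j = if j ∈ s then ∑ i ∈ s, a i - a j else 0 := by
  simp [dysonExp, Finsupp.indicator_apply]

theorem dysonPoly_congr {s : Finset σ} {a b : σ → ℕ} (h : ∀ i ∈ s, a i = b i) :
    dysonPoly R s a = dysonPoly R s b :=
  prod_congr rfl fun ij hij => by rw [h ij.1 (mem_offDiag.1 hij).1]

theorem dysonPoly_insert [DecidableEq σ] {t : Finset σ} {k : σ} (hk : k ∉ t) (a : σ → ℕ) :
    dysonPoly R (insert k t) a =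
      dysonPoly R t a * (∏ j ∈ t, (X j - X k)) ^ a k * ∏ j ∈ t, (X k - X j) ^ a j := by
  rw [dysonPoly, offDiag_insert hk, prod_union, prod_union, singleton_product, product_singleton,
    prod_map, prod_map, ← prod_pow]
  · rfl
  · grind [Finset.disjoint_left]
  · grind [Finset.disjoint_left]

theorem vars_dysonPoly_subset [DecidableEq σ] [Nontrivial R] (s : Finset σ) (a : σ → ℕ) :
    (dysonPoly R s a).vars ⊆ s := by
  refine (vars_prod _).trans (biUnion_subset.2 fun ij hij => (vars_pow _ _).trans ?_)
  obtain ⟨hi, hj, -⟩ := mem_offDiag.1 hij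
  refine (vars_sub_subset _).trans (union_subset ?_ ?_) <;> simp [vars_X, hi, hj]

theorem dysonPoly_eq_prod_mul_dysonPoly_update [DecidableEq σ] {s : Finset σ} {a : σ → ℕ} {k : σ}
    (hk : k ∈ s) (hak : a k ≠ 0) :
    dysonPoly R s a =
      (∏ j ∈ s.erase k, (X j - X k)) * dysonPoly R s (Function.update a k (a k - 1)) := by
  obtain ⟨b, hb⟩ : ∃ b, a k = b + 1 := ⟨a k - 1, by omega⟩
  have hupd : ∀ j ∈ s.erase k, Function.update a k b j = a j :=
    fun j hj => Function.update_of_ne (ne_of_mem_erase hj) _ _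
  have hpow : ∏ j ∈ s.erase k, (X k - X j : MvPolynomial σ R) ^ Function.update a k b j =
      ∏ j ∈ s.erase k, (X k - X j) ^ a j := prod_congr rfl fun j hj => by rw [hupd j hj]
  have hins : insert k (s.erase k) = s := insert_erase hk
  rw [hb, Nat.add_sub_cancel, ← hins, dysonPoly_insert (notMem_erase k s),
    dysonPoly_insert (notMem_erase k s), Function.update_self, dysonPoly_congr hupd, hpow, hb,
    pow_succ, erase_insert (notMem_erase k s)]
  ring

theorem dysonPoly_eq_sum [DecidableEq σ] [IsDomain R] {s : Finset σ} (hs : s.Nonempty)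
    {a : σ → ℕ} (ha : ∀ k ∈ s, a k ≠ 0) :
    dysonPoly R s a =
      ∑ k ∈ s, (∏ j ∈ s.erase k, X j) * dysonPoly R s (Function.update a k (a k - 1)) := by
  set v : σ → FractionRing (MvPolynomial σ R) := fun j =>
    algebraMap (MvPolynomial σ R) (FractionRing (MvPolynomial σ R)) (X j)
  have hv : Function.Injective v :=
    (IsFractionRing.injective _ _).comp (X_injective (σ := σ) (R := R))
  have hsub : ∀ k ∈ s, ∀ j ∈ s.erase k, v j - v k ≠ 0 :=
    fun k _ j hj => sub_ne_zero.2 fun h => ne_of_mem_erase hj (hv h)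
  apply IsFractionRing.injective (MvPolynomial σ R) (FractionRing (MvPolynomial σ R))
  rw [map_sum, ← mul_one (algebraMap _ _ _), ← Lagrange.sum_prod_div_sub_eq_one hv.injOn hs,
    mul_sum]
  refine sum_congr rfl fun k hk => ?_
  rw [dysonPoly_eq_prod_mul_dysonPoly_update hk (ha k hk)]
  simp only [map_mul, map_prod, map_sub]
  rw [prod_div_distrib]
  field_simp [prod_ne_zero_iff.2 (hsub k hk)]
  simp only [v]
  ring

theorem coeff_dysonPoly_of_eq_zero [DecidableEq σ] [Nontrivial R] {s : Finset σ} {a : σ → ℕ}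
    {k : σ} (hk : k ∈ s) (hak : a k = 0) :
    coeff (dysonExp s a) (dysonPoly R s a) =
      coeff (dysonExp (s.erase k) a) (dysonPoly R (s.erase k) a) := by
  have hsum : ∑ i ∈ s.erase k, a i = ∑ i ∈ s, a i := sum_erase s hak
  have hexp : dysonExp s a = dysonExp (s.erase k) a + Finsupp.single k (∑ i ∈ s.erase k, a i) := by
    ext j
    rw [Finsupp.add_apply, dysonExp_apply, dysonExp_apply, Finsupp.single_apply, hsum]
    by_cases hjk : k = j
    · subst hjk; simp [hk, hak]
    · simp [hjk, Ne.symm hjk]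
  -- `X k` only occurs in the homogeneous factor `∏ j, (X k - X j) ^ a j`, whose sole monomial of
  -- `X k`-degree `∑ j, a j` is `X k ^ ∑ j, a j`.
  have hpoly := dysonPoly_insert (R := R) (notMem_erase k s) a
  rw [insert_erase hk, hak, pow_zero, mul_one] at hpoly
  have hG : (∏ j ∈ s.erase k, (X k - X j : MvPolynomial σ R) ^ a j).IsHomogeneous
      (∑ j ∈ s.erase k, a j) :=
    IsHomogeneous.prod _ _ _ fun j _ => by
      simpa using ((isHomogeneous_X R k).sub (isHomogeneous_X R j)).pow (a j)
  rw [hexp, hpoly, coeff_add_single_mul_of_isHomogeneous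
    (fun h => notMem_erase k s (vars_dysonPoly_subset _ _ h)) hG, hG.coeff_single_eq_eval]
  rw [eval_prod, prod_eq_one, mul_one]
  intro j hj
  simp [ne_of_mem_erase hj]

theorem coeff_dysonPoly_eq_sum [DecidableEq σ] [IsDomain R] {s : Finset σ} (hs : s.Nonempty)
    {a : σ → ℕ} (ha : ∀ k ∈ s, a k ≠ 0) :
    coeff (dysonExp s a) (dysonPoly R s a) = ∑ k ∈ s,
      coeff (dysonExp s (Function.update a k (a k - 1)))
        (dysonPoly R s (Function.update a k (a k - 1))) := by
  rw [dysonPoly_eq_sum hs ha, coeff_sum]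
  refine sum_congr rfl fun k hk => ?_
  have hX : ∏ j ∈ s.erase k, (X j : MvPolynomial σ R) =
      monomial (Finsupp.indicator (s.erase k) fun _ _ => 1) 1 := by
    simpa using prod_X_pow (R := R) (fun _ => 1) (s.erase k)
  have hexp : dysonExp s a = (Finsupp.indicator (s.erase k) fun _ _ => 1) +
      dysonExp s (Function.update a k (a k - 1)) := by
    ext j
    rw [Finsupp.add_apply, dysonExp_apply, dysonExp_apply, Finset.sum_update_sub_one hk (ha k hk),
      Finsupp.indicator_apply]
    by_cases hjk : j = k
    · subst hjk
      have := single_le_sum (fun i _ => Nat.zero_le (a i)) hk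
      have := ha j hk
      simp only [hk, if_true, mem_erase, ne_eq, not_true_eq_false, false_and, dite_false,
        Function.update_self, zero_add]
      omega
    by_cases hj : j ∈ s
    · have : a j + a k ≤ ∑ i ∈ s, a i := by
        rw [← sum_pair hjk]
        exact sum_le_sum_of_subset (by simp [insert_subset_iff, hj, hk])
      have := ha k hk
      simp only [hj, if_true, mem_erase, ne_eq, hjk, not_false_eq_true, and_self, dite_true,
        Function.update_of_ne]
      omega
    · simp [hj]
  rw [hX, hexp, coeff_monomial_mul, one_mul]

theorem coeff_dysonExp_dysonPoly [DecidableEq σ] [IsDomain R] (s : Finset σ) (a : σ → ℕ) :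
    coeff (dysonExp s a) (dysonPoly R s a) = Nat.multinomial s a := by
  by_cases hzero : ∃ k ∈ s, a k = 0
  · obtain ⟨k, hk, hak⟩ := hzero
    rw [coeff_dysonPoly_of_eq_zero hk hak, coeff_dysonExp_dysonPoly (s.erase k) a,
      Nat.multinomial_congr_of_sdiff (erase_subset k s)
      (fun i hi => by rw [sdiff_erase_self hk, mem_singleton] at hi; rwa [hi]) fun _ _ => rfl]
  push Not at hzero
  rcases s.eq_empty_or_nonempty with rfl | hs
  · have : dysonExp (∅ : Finset σ) a = 0 := by ext; simp [dysonExp_apply]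
    simp [dysonPoly, this]
  rw [coeff_dysonPoly_eq_sum hs hzero, Nat.multinomial_eq_sum_multinomial_update hs hzero,
    Nat.cast_sum]
  exact sum_congr rfl fun k hk => coeff_dysonExp_dysonPoly s _
termination_by ∑ i ∈ s, a i + #s
decreasing_by
  · rw [sum_erase s hak, card_erase_of_mem hk]
    have := card_pos.2 ⟨k, hk⟩
    omega
  · have hak : a k ≠ 0 := fun h => hzero ⟨k, hk, h⟩
    have := single_le_sum (fun i _ => Nat.zero_le (a i)) hk
    rw [Finset.sum_update_sub_one hk hak]
    omega

end Dyson

end MvPolynomial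

section Pairing

open Function

variable {K : Type*} [Field K] {n : ℕ}

noncomputable def pairingPoly (d : Fin n → K) : MvPolynomial (Fin n) K :=
  ∏ ij ∈ (univ : Finset (Fin n)).offDiag, (X ij.1 - X ij.2 + C (d ij.1)) *
    (X ij.1 - X ij.2 + C (if ij.1 < ij.2 then 0 else d ij.1 - d ij.2))

theorem injective_sumElim_of_eval_pairingPoly_ne_zero {d x : Fin n → K} (hd : ∀ i, d i ≠ 0)
    (hx : eval x (pairingPoly d) ≠ 0) : Injective (Sum.elim x (x + d)) := by
  have hfac : ∀ i j, i ≠ j → x i - x j + d i ≠ 0 ∧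
      x i - x j + (if i < j then 0 else d i - d j) ≠ 0 := by
    intro i j hij
    have := prod_ne_zero_iff.1 (by simpa [pairingPoly, eval_prod] using hx) (i, j) (by simp [hij])
    simpa using this
  refine Injective.sumElim (fun i j h => ?_) (fun i j h => ?_) (fun i j h => ?_)
  · by_contra hij
    rcases lt_or_gt_of_ne hij with hlt | hgt
    · simpa [hlt, h] using (hfac i j hij).2
    · simpa [hgt, h] using (hfac j i (Ne.symm hij)).2
  · by_contra hij
    rcases lt_or_gt_of_ne hij with hlt | hgt
    · refine (hfac j i (Ne.symm hij)).2 ?_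
      simp only [Pi.add_apply] at h
      rw [if_neg (not_lt.2 hlt.le)]
      linear_combination -h
    · refine (hfac i j hij).2 ?_
      simp only [Pi.add_apply] at h
      rw [if_neg (not_lt.2 hgt.le)]
      linear_combination h
  · by_cases hij : i = j
    · subst hij
      exact hd i (by simpa using h)
    · refine (hfac j i (Ne.symm hij)).1 ?_
      simp only [Pi.add_apply] at h
      linear_combination -h

theorem degree_dysonExp_two (n : ℕ) :
    (dysonExp (univ : Finset (Fin n)) fun _ => 2).degree =
      ∑ _ij ∈ (univ : Finset (Fin n)).offDiag, 2 := by
  simp only [Finsupp.degree_eq_sum, dysonExp_apply, mem_univ, if_true, sum_const, card_univ,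
    Fintype.card_fin, smul_eq_mul, offDiag_card]
  rw [Nat.mul_sub, Nat.sub_mul, mul_left_comm, ← mul_assoc]

theorem totalDegree_pairingPoly_le (d : Fin n → K) :
    (pairingPoly d).totalDegree ≤ ∑ _ij ∈ (univ : Finset (Fin n)).offDiag, 2 :=
  (totalDegree_finsetProd _ _).trans
    (sum_le_sum fun _ _ => totalDegree_mul_X_sub_X_add_C_le _ _ _ _)

theorem homogeneousComponent_pairingPoly (d : Fin n → K) :
    homogeneousComponent (∑ _ij ∈ (univ : Finset (Fin n)).offDiag, 2) (pairingPoly d) =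
      dysonPoly K univ fun _ => 2 := by
  rw [pairingPoly, homogeneousComponent_prod_of_totalDegree_le _ _ _
    fun _ _ => totalDegree_mul_X_sub_X_add_C_le _ _ _ _, dysonPoly]
  exact prod_congr rfl fun ij _ => by rw [homogeneousComponent_two_mul_X_sub_X_add_C, sub_sq_comm]

theorem coeff_pairingPoly (d : Fin n → K) :
    coeff (dysonExp univ fun _ => 2) (pairingPoly d) = Nat.multinomial univ fun _ : Fin n => 2 := by
  have htop := coeff_homogeneousComponent (∑ _ij ∈ (univ : Finset (Fin n)).offDiag, 2)
    (pairingPoly d) (dysonExp univ fun _ => 2)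
  rw [if_pos (degree_dysonExp_two n), homogeneousComponent_pairingPoly] at htop
  rw [← htop, coeff_dysonExp_dysonPoly]

theorem exists_injective_sumElim_add [Fintype K] (hK : ((2 * n)! : K) ≠ 0) {d : Fin n → K}
    (hd : ∀ i, d i ≠ 0) : ∃ x : Fin n → K, Injective (Sum.elim x (x + d)) := by
  set m := dysonExp (univ : Finset (Fin n)) fun _ => 2
  have hcoeff : coeff m (pairingPoly d) ≠ 0 := by
    rw [coeff_pairingPoly]
    intro h
    apply hK
    have hspec := Nat.multinomial_spec (univ : Finset (Fin n)) fun _ => 2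
    simp only [sum_const, card_univ, Fintype.card_fin, smul_eq_mul] at hspec
    rw [mul_comm 2 n, ← hspec, Nat.cast_mul, h, mul_zero]
  have hdeg : (pairingPoly d).totalDegree = m.degree := by
    refine le_antisymm ?_ (degree_le_totalDegree hcoeff)
    exact (totalDegree_pairingPoly_le d).trans_eq (degree_dysonExp_two n).symm
  have hcard : 2 * n < Fintype.card K := by
    by_contra! h
    obtain ⟨c, hc⟩ := Nat.dvd_factorial Fintype.card_pos h
    exact hK (by rw [hc, Nat.cast_mul, FiniteField.cast_card_eq_zero, zero_mul])
  have hm : ∀ i, m i < #(univ : Finset K) := fun i => by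
    simp only [m, dysonExp_apply, mem_univ, if_true, sum_const, card_univ, Fintype.card_fin,
      smul_eq_mul]
    omega
  obtain ⟨x, -, hx⟩ :=
    combinatorial_nullstellensatz_exists_eval_nonzero (pairingPoly d) m hcoeff hdeg _ hm
  exact ⟨x, injective_sumElim_of_eval_pairingPoly_ne_zero hd hx⟩

end Pairing

theorem preissmann_mischler_general (n : ℕ) (p : ℕ) (hp : p.Prime) (hpn : 2 * n + 1 ≤ p)
    (d : Fin n → ℤ) (hpd : ∀ i, ¬ (p : ℤ) ∣ d i) :
    ∃ x y : Fin n → ℤ,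
      Function.Injective (Sum.elim (fun i => ((x i : ZMod p))) (fun i => ((y i : ZMod p)))) ∧
      ∀ i, ((x i + d i : ℤ) : ZMod p) = ((y i : ℤ) : ZMod p) := by
  have := Fact.mk hp
  have hK : ((2 * n)! : ZMod p) ≠ 0 := by
    rw [Ne, ZMod.natCast_eq_zero_iff, hp.dvd_factorial]
    omega
  obtain ⟨x, hx⟩ := exists_injective_sumElim_add hK (d := fun i => (d i : ZMod p))
    fun i h => hpd i ((ZMod.intCast_zmod_eq_zero_iff_dvd _ _).1 h)
  refine ⟨fun i => (x i).val, fun i => (x i).val + d i, ?_, fun i => rfl⟩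
  convert hx using 1
  funext u
  rcases u with i | i <;> simp

theorem preissmann_mischler (n : ℕ) (p : ℕ) (hp : p.Prime) (hpn : 2 * n + 1 ≤ p)
    (d : Fin n → ℤ) (hd : ∀ i, 0 < d i) (hpd : ∀ i, ¬ (p : ℤ) ∣ d i) :
    ∃ x y : Fin n → ℤ,
      Function.Injective (Sum.elim (fun i => ((x i : ZMod p))) (fun i => ((y i : ZMod p)))) ∧
      ∀ i, ((x i + d i : ℤ) : ZMod p) = ((y i : ℤ) : ZMod p) :=
  preissmann_mischler_general n p hp hpn d hpd
end

section
/- There do not exist integers d_1, d_2, d_3 with d_3 = d_1 + d_2 together with residues x_1, x_2, x_3, y_1, y_2, y_3 all pairwise distinct modulo 6 satisfying x_i + d_i ≡ y_i (mod 6) for i = 1, 2, 3 and each d_i coprime to 6. -/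
lemma odd_of_coprime_six {d : ℤ} (h : IsCoprime d (6 : ℤ)) : Odd d := by
  rcases Int.even_or_odd d with he | ho
  · exfalso
    have g := Int.isCoprime_iff_gcd_eq_one.1 h
    have h2 : (2 : ℕ) ∣ Int.gcd d 6 :=
      Nat.dvd_gcd (Int.natAbs_dvd_natAbs.2 he.two_dvd) (by norm_num)
    omega
  · exact ho

theorem no_system_mod_six_coprime :
    ¬ ∃ d₁ d₂ d₃ x₁ x₂ x₃ y₁ y₂ y₃ : ℤ,
      d₃ = d₁ + d₂ ∧
      IsCoprime d₁ (6 : ℤ) ∧ IsCoprime d₂ (6 : ℤ) ∧ IsCoprime d₃ (6 : ℤ) ∧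
      ([(x₁ : ZMod 6), (x₂ : ZMod 6), (x₃ : ZMod 6),
        (y₁ : ZMod 6), (y₂ : ZMod 6), (y₃ : ZMod 6)] : List (ZMod 6)).Pairwise Ne ∧
      ((x₁ + d₁ : ℤ) : ZMod 6) = ((y₁ : ℤ) : ZMod 6) ∧
      ((x₂ + d₂ : ℤ) : ZMod 6) = ((y₂ : ℤ) : ZMod 6) ∧
      ((x₃ + d₃ : ℤ) : ZMod 6) = ((y₃ : ℤ) : ZMod 6) := by
  rintro ⟨d₁, d₂, d₃, x₁, x₂, x₃, y₁, y₂, y₃, hsum, h1, h2, h3, -, -, -, -⟩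
  have e3 : Even d₃ := hsum ▸ (odd_of_coprime_six h1).add_odd (odd_of_coprime_six h2)
  have g3 := Int.isCoprime_iff_gcd_eq_one.1 h3
  have : (2 : ℕ) ∣ Int.gcd d₃ 6 :=
    Nat.dvd_gcd (Int.natAbs_dvd_natAbs.2 e3.two_dvd) (by norm_num)
  omega
end

section
/- There do not exist integers d_1, d_2, d_3 with d_3 = d_1 + d_2 and residues x_1, x_2, x_3, y_1, y_2, y_3 ∈ ℤ/6ℤ all pairwise distinct such that x_i + d_i ≡ y_i (mod 6) for i = 1, 2, 3. -/
theorem no_system_mod_six :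
    ¬ ∃ d₁ d₂ d₃ x₁ x₂ x₃ y₁ y₂ y₃ : ZMod 6,
      d₃ = d₁ + d₂ ∧
      ([x₁, x₂, x₃, y₁, y₂, y₃] : List (ZMod 6)).Pairwise Ne ∧
      x₁ + d₁ = y₁ ∧ x₂ + d₂ = y₂ ∧ x₃ + d₃ = y₃ := by
  rintro ⟨d₁, d₂, d₃, x₁, x₂, x₃, y₁, y₂, y₃, rfl, hp, rfl, rfl, rfl⟩
  revert hp
  revert d₁ d₂ x₁ x₂ x₃
  decide
end

section
/- Let d ≥ 1 and let S be a finite set of n primitive winning directions in ℤ^d, and m a positive integer. If for every N there is a pairing (a fixed-point-free partial matching of the points of {1,...,N}^d) such that every winning set contained in {1,...,N}^d (a set of m consecutive grid points in some direction from S) contains a matched pair, then there is a pairing of ℤ^d such that every winning set in ℤ^d contains a matched pair. -/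
open Filter

theorem pairing_compactness (d n m : ℕ) (hd : 1 ≤ d) (hm : 1 ≤ m)
    (S : Finset (Fin d → ℤ)) (hS : S.card = n)
    (hprim : ∀ v ∈ S, Finset.univ.gcd v = 1)
    (H : ∀ N : ℕ, ∃ π : (Fin d → ℤ) → Option (Fin d → ℤ),
      (∀ z w : Fin d → ℤ, π z = some w → π w = some z ∧ z ≠ w ∧
        (∀ k, z k ∈ Finset.Icc (1 : ℤ) N) ∧ (∀ k, w k ∈ Finset.Icc (1 : ℤ) N)) ∧
      (∀ a : Fin d → ℤ, ∀ v ∈ S,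
        (∀ j : ℕ, j < m → ∀ k, a k + j * v k ∈ Finset.Icc (1 : ℤ) N) →
        ∃ j : ℕ, j + 1 < m ∧
          π (fun k => a k + j * v k) = some (fun k => a k + (j + 1) * v k))) :
    ∃ π : (Fin d → ℤ) → Option (Fin d → ℤ),
      (∀ z w : Fin d → ℤ, π z = some w → π w = some z ∧ z ≠ w) ∧
      (∀ a : Fin d → ℤ, ∀ v ∈ S, ∃ j : ℕ, j + 1 < m ∧
        π (fun k => a k + j * v k) = some (fun k => a k + (j + 1) * v k)) := by
  classical
  choose P hP1 hP2 using H
  -- translated pairings: ρ N is a pairing of the box [-N, N]^d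
  set c : ℕ → (Fin d → ℤ) := fun N _ => (N : ℤ) + 1 with hc
  set ρ : ℕ → (Fin d → ℤ) → Option (Fin d → ℤ) :=
    fun N z => Option.map (fun w => w - c N) (P (2 * N + 1) (z + c N)) with hρ
  have hρ_iff : ∀ N z w, ρ N z = some w ↔ P (2 * N + 1) (z + c N) = some (w + c N) := by
    intro N z w
    simp only [hρ, Option.map_eq_some_iff]
    constructor
    · rintro ⟨u, hu, rfl⟩
      simpa using hu
    · intro h
      exact ⟨w + c N, h, by simp⟩
  -- a nonprincipal ultrafilter
  let U : Ultrafilter ℕ := Ultrafilter.of Filter.cofinite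
  have hU : ∀ s : Set ℕ, s ∈ Filter.cofinite → s ∈ U := fun s hs => Ultrafilter.of_le _ hs
  -- the limit pairing
  set π : (Fin d → ℤ) → Option (Fin d → ℤ) :=
    fun z => if h : ∃ w, {N | ρ N z = some w} ∈ U then some h.choose else none with hπ
  have key : ∀ z w, π z = some w ↔ {N | ρ N z = some w} ∈ U := by
    intro z w
    constructor
    · intro h
      simp only [hπ] at h
      split_ifs at h with hex
      · have hspec := hex.choose_spec
        rw [Option.some.injEq] at h
        rwa [h] at hspec
    · intro h
      have hex : ∃ w', {N | ρ N z = some w'} ∈ U := ⟨w, h⟩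
      simp only [hπ, dif_pos hex, Option.some.injEq]
      have h1 := hex.choose_spec
      obtain ⟨N, hN1, hN2⟩ := Filter.nonempty_of_mem (Filter.inter_mem h1 h)
      simp only [Set.mem_setOf_eq] at hN1 hN2
      exact Option.some_injective _ (hN1.symm.trans hN2)
  refine ⟨π, ?_, ?_⟩
  · -- involution, no fixed points
    intro z w h
    rw [key] at h
    obtain ⟨N, hN⟩ := Filter.nonempty_of_mem h
    have hN' := (hρ_iff N z w).mp hN
    have hPN := hP1 (2 * N + 1) _ _ hN'
    constructor
    · rw [key]
      refine Filter.mem_of_superset h ?_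
      intro M hM
      have hM' := (hρ_iff M z w).mp hM
      have := (hP1 (2 * M + 1) _ _ hM').1
      exact (hρ_iff M w z).mpr this
    · intro hzw
      exact hPN.2.1 (by rw [hzw])
  · -- blocking
    intro a v hv
    -- bound on the winning set
    set B : ℕ := Finset.sup (Finset.range m)
      (fun j => Finset.sup Finset.univ fun k => (a k + j * v k).natAbs) with hB
    have hbound : ∀ j : ℕ, j < m → ∀ k, ∀ N : ℕ, B ≤ N →
        -(N : ℤ) ≤ a k + j * v k ∧ a k + j * v k ≤ N := by
      intro j hj k N hBN
      have h1 : (a k + j * v k).natAbs ≤ B := by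
        refine le_trans ?_ (Finset.le_sup (Finset.mem_range.mpr hj))
        exact Finset.le_sup (f := fun k => (a k + (j : ℤ) * v k).natAbs) (Finset.mem_univ k)
      have h2 : (a k + j * v k).natAbs ≤ N := le_trans h1 hBN
      omega
    -- for each N ≥ B, some consecutive pair is matched by ρ N
    have hcover : {N : ℕ | B ≤ N} ⊆
        ⋃ j ∈ Finset.range (m - 1),
          {N : ℕ | ρ N (fun k => a k + j * v k) = some (fun k => a k + (j + 1) * v k)} := by
      intro N hN
      have hbox : ∀ j : ℕ, j < m → ∀ k,
          (a + c N) k + j * v k ∈ Finset.Icc (1 : ℤ) ((2 * N + 1 : ℕ) : ℤ) := by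
        intro j hj k
        have := hbound j hj k N hN
        simp only [Finset.mem_Icc, Pi.add_apply, hc]
        push_cast
        constructor <;> linarith [this.1, this.2]
      obtain ⟨j, hj, hpj⟩ := hP2 (2 * N + 1) (a + c N) v hv hbox
      refine Set.mem_iUnion.mpr ⟨j, Set.mem_iUnion.mpr ⟨Finset.mem_range.mpr (by omega), ?_⟩⟩
      show ρ N (fun k => a k + j * v k) = some (fun k => a k + (j + 1) * v k)
      rw [hρ_iff]
      have e1 : (fun k => a k + (j : ℤ) * v k) + c N = fun k => (a + c N) k + j * v k := by
        funext k; simp [hc]; ring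
      have e2 : (fun k => a k + ((j : ℤ) + 1) * v k) + c N
          = fun k => (a + c N) k + ((j : ℤ) + 1) * v k := by
        funext k; simp [hc]; ring
      rw [e1, e2]
      convert hpj using 3
    have hcof : {N : ℕ | B ≤ N} ∈ U := by
      apply hU
      rw [Filter.mem_cofinite]
      have : {N : ℕ | B ≤ N}ᶜ ⊆ Set.Iio B := by
        intro x hx
        simp only [Set.mem_compl_iff, Set.mem_setOf_eq, not_le] at hx
        exact hx
      exact Set.Finite.subset (Set.finite_Iio B) this
    have hunion : (⋃ j ∈ Finset.range (m - 1),
        {N : ℕ | ρ N (fun k => a k + j * v k) = some (fun k => a k + (j + 1) * v k)}) ∈ U :=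
      Filter.mem_of_superset hcof hcover
    rw [show (⋃ j ∈ Finset.range (m - 1),
        {N : ℕ | ρ N (fun k => a k + j * v k) = some (fun k => a k + (j + 1) * v k)})
      = ⋃ j ∈ (↑(Finset.range (m - 1)) : Set ℕ),
        {N : ℕ | ρ N (fun k => a k + j * v k) = some (fun k => a k + (j + 1) * v k)} by
        simp] at hunion
    rw [Ultrafilter.finite_biUnion_mem_iff (Finset.finite_toSet _)] at hunion
    obtain ⟨j, hj, hjU⟩ := hunion
    simp only [Finset.coe_sort_coe, Finset.mem_coe, Finset.mem_range] at hj
    refine ⟨j, by omega, ?_⟩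
    rw [key]
    exact hjU
end

section
/- Let p ≥ 2n+1 be a prime and let v_1, ..., v_n ∈ ℤ^d be primitive vectors. Then there exists a vector r ∈ ℤ^d and integers d_i = r · v_i such that (a) the map v ↦ v · r is injective on {1,...,N}^d for a given N, and (b) no d_i is divisible by p. -/
lemma base_unique : ∀ (d : ℕ) (B : ℤ) (δ : Fin d → ℤ), 0 < B →
    (∀ j, |δ j| < B) → ∑ j, δ j * B ^ (j : ℕ) = 0 → ∀ j, δ j = 0 := by
  intro d
  induction d with
  | zero => intro B δ _ _ _ j; exact absurd j.2 (by omega)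
  | succ d ih =>
    intro B δ hB hδ hsum j
    rw [Fin.sum_univ_succ] at hsum
    have h1 : δ 0 + B * ∑ i : Fin d, δ i.succ * B ^ (i : ℕ) = 0 := by
      rw [Finset.mul_sum]
      rw [← hsum]
      congr 1
      · simp
      · apply Finset.sum_congr rfl
        intro i _
        have h2 : ((i.succ : Fin (d + 1)) : ℕ) = (i : ℕ) + 1 := rfl
        rw [h2, pow_succ]
        ring
    have hd0 : δ 0 = 0 := by
      have hdvd : B ∣ δ 0 := ⟨-(∑ i : Fin d, δ i.succ * B ^ (i : ℕ)), by linarith⟩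
      exact Int.eq_zero_of_abs_lt_dvd hdvd (hδ 0)
    have hs : ∑ i : Fin d, δ i.succ * B ^ (i : ℕ) = 0 := by
      rcases mul_eq_zero.mp (by linarith : B * ∑ i : Fin d, δ i.succ * B ^ (i : ℕ) = 0) with h | h
      · exact absurd h (by linarith)
      · exact h
    have hrest := ih B (fun i => δ i.succ) hB (fun i => hδ i.succ) hs
    rcases Fin.eq_zero_or_eq_succ j with rfl | ⟨i, rfl⟩
    · exact hd0
    · exact hrest i

theorem exists_injective_reduction (n p d N : ℕ) (hp : p.Prime) (hpn : 2 * n + 1 ≤ p)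
    (hN : 0 < N) (v : Fin n → Fin d → ℤ) (hprim : ∀ i, Finset.univ.gcd (v i) = 1) :
    ∃ r : Fin d → ℤ,
      Set.InjOn (fun w : Fin d → ℤ => ∑ j, w j * r j)
        {w | ∀ j, w j ∈ Finset.Icc (1 : ℤ) N} ∧
      ∀ i, ¬ (p : ℤ) ∣ ∑ j, r j * v i j := by
  haveI : Fact p.Prime := ⟨hp⟩
  have hp2 : 2 ≤ p := hp.two_le
  -- each v i is nonzero mod p
  have hv : ∀ i, ∃ j, ((v i j : ZMod p)) ≠ 0 := by
    intro i
    by_contra h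
    push_neg at h
    have hdvd : (p : ℤ) ∣ Finset.univ.gcd (v i) :=
      Finset.dvd_gcd fun j _ => (ZMod.intCast_zmod_eq_zero_iff_dvd _ p).mp (h j)
    rw [hprim i] at hdvd
    have : (p : ℤ) ≤ 1 := Int.le_of_dvd one_pos hdvd
    omega
  -- find u : (ZMod p)^d with all dot products nonzero
  have main : ∀ m : ℕ, m ≤ n → ∃ u : Fin d → ZMod p,
      ∀ i : Fin n, (i : ℕ) < m → ∑ j, u j * ((v i j : ℤ) : ZMod p) ≠ 0 := by
    intro m
    induction m with
    | zero => exact fun _ => ⟨0, fun i hi => absurd hi (by omega)⟩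
    | succ m ih =>
      intro hm
      obtain ⟨u, hu⟩ := ih (by omega)
      set i0 : Fin n := ⟨m, by omega⟩ with hi0
      obtain ⟨j0, hj0⟩ := hv i0
      set w : Fin d → ZMod p := Pi.single j0 1 with hw
      have hwi0 : ∑ j, w j * ((v i0 j : ℤ) : ZMod p) = ((v i0 j0 : ℤ) : ZMod p) := by
        rw [hw]
        simp [Pi.single_apply, ite_mul]
      set T : Finset (ZMod p) := Finset.univ.image
        (fun i : Fin n => -(∑ j, w j * ((v i j : ℤ) : ZMod p)) *
          (∑ j, u j * ((v i j : ℤ) : ZMod p))⁻¹) with hT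
      obtain ⟨t, ht⟩ : ∃ t, t ∉ T := by
        by_contra hcon
        push_neg at hcon
        have hsub : (Finset.univ : Finset (ZMod p)) ⊆ T := fun x _ => hcon x
        have h1 := Finset.card_le_card hsub
        have h2 : T.card ≤ n := Finset.card_image_le.trans (by simp)
        rw [Finset.card_univ, ZMod.card] at h1
        omega
      refine ⟨fun j => w j + t * u j, fun i hi => ?_⟩
      have hexp : ∑ j, (w j + t * u j) * ((v i j : ℤ) : ZMod p) =
          (∑ j, w j * ((v i j : ℤ) : ZMod p)) + t * ∑ j, u j * ((v i j : ℤ) : ZMod p) := by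
        rw [Finset.mul_sum, ← Finset.sum_add_distrib]
        apply Finset.sum_congr rfl
        intro j _
        ring
      rw [hexp]
      by_cases hcase : ∑ j, u j * ((v i j : ℤ) : ZMod p) = 0
      · have hieq : i = i0 := by
          have h3 : ¬ ((i : ℕ) < m) := fun h => hu i h hcase
          have him : (i : ℕ) = m := by omega
          exact Fin.ext him
        rw [hcase, mul_zero, add_zero, hieq, hwi0]
        exact hj0
      · intro habs
        apply ht
        rw [hT]
        apply Finset.mem_image.mpr
        refine ⟨i, Finset.mem_univ i, ?_⟩
        field_simp
        linear_combination -habs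
  obtain ⟨u, hu⟩ := main n le_rfl
  have hugood : ∀ i, ∑ j, u j * ((v i j : ℤ) : ZMod p) ≠ 0 := fun i => hu i i.2
  -- lift u to integers
  set uz : Fin d → ℤ := fun j => ((u j).val : ℤ) with huz
  have huz0 : ∀ j, 0 ≤ uz j := fun j => Int.natCast_nonneg _
  have huzlt : ∀ j, uz j < p := fun j => by
    simp only [huz]
    exact_mod_cast (ZMod.val_lt (u j))
  have huzcast : ∀ j, ((uz j : ℤ) : ZMod p) = u j := fun j => by
    rw [huz]
    push_cast
    exact ZMod.natCast_rightInverse (u j)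
  set B : ℤ := (d : ℤ) * N * p + N with hBdef
  have hNB : (N : ℤ) ≤ B := by
    have : 0 ≤ (d : ℤ) * N * p :=
      mul_nonneg (mul_nonneg (Int.natCast_nonneg _) (Int.natCast_nonneg _)) (Int.natCast_nonneg _)
    omega
  have hB : 0 < B := by
    have : (1 : ℤ) ≤ N := by exact_mod_cast hN
    omega
  refine ⟨fun j => uz j + ((p : ℤ) * B) * B ^ (j : ℕ), ?_, ?_⟩
  · -- injectivity
    intro w hw w' hw' heq
    simp only [Set.mem_setOf_eq, Finset.mem_Icc] at hw hw'
    simp only at heq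
    set δ : Fin d → ℤ := fun j => w j - w' j with hδ
    have hδbound : ∀ j, |δ j| ≤ (N : ℤ) - 1 := by
      intro j
      have h1 := hw j
      have h2 := hw' j
      have hδj : δ j = w j - w' j := rfl
      rw [abs_le, hδj]
      omega
    have key : (∑ j, δ j * uz j) + ((p : ℤ) * B) * (∑ j, δ j * B ^ (j : ℕ)) = 0 := by
      have h0 : ∑ j, (w j * (uz j + ((p : ℤ) * B) * B ^ (j : ℕ))
          - w' j * (uz j + ((p : ℤ) * B) * B ^ (j : ℕ))) = 0 := by
        rw [Finset.sum_sub_distrib, heq, sub_self]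
      rw [← h0, Finset.mul_sum, ← Finset.sum_add_distrib]
      apply Finset.sum_congr rfl
      intro j _
      rw [hδ]
      ring
    set A : ℤ := ∑ j, δ j * uz j with hA
    set s : ℤ := ∑ j, δ j * B ^ (j : ℕ) with hs
    have hAbound : |A| ≤ (d : ℤ) * ((N - 1) * (p - 1)) := by
      rw [hA]
      calc |∑ j, δ j * uz j| ≤ ∑ j, |δ j * uz j| := Finset.abs_sum_le_sum_abs _ _
        _ ≤ ∑ _j : Fin d, ((N : ℤ) - 1) * ((p : ℤ) - 1) := by
            apply Finset.sum_le_sum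
            intro j _
            rw [abs_mul]
            have hN1 : (1 : ℤ) ≤ N := by exact_mod_cast hN
            apply mul_le_mul (hδbound j) ?_ (abs_nonneg _) (by omega)
            rw [abs_of_nonneg (huz0 j)]
            have := huzlt j
            omega
        _ = (d : ℤ) * ((N - 1) * (p - 1)) := by
            rw [Finset.sum_const, Finset.card_univ, Fintype.card_fin, nsmul_eq_mul]
    have hAlt : |A| < (p : ℤ) * B := by
      have hd0 : (0 : ℤ) ≤ d := Int.natCast_nonneg _
      have hN1 : (1 : ℤ) ≤ N := by exact_mod_cast hN
      have hp1 : (2 : ℤ) ≤ p := by exact_mod_cast hp2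
      refine hAbound.trans_lt ?_
      rw [hBdef]
      nlinarith [mul_nonneg hd0 (mul_nonneg (mul_nonneg (by linarith : (0:ℤ) ≤ (N:ℤ))
          (by linarith : (0:ℤ) ≤ (p:ℤ))) (by linarith : (0:ℤ) ≤ (p:ℤ) - 1)),
        mul_nonneg hd0 (by linarith : (0:ℤ) ≤ (N:ℤ) + (p:ℤ) - 1)]
    have hs0 : s = 0 := by
      by_contra hsne
      have h1 : (1 : ℤ) ≤ |s| := by
        rcases lt_or_gt_of_ne hsne with h | h
        · rw [abs_of_neg h]; omega
        · rw [abs_of_pos h]; omega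
      have h2 : |A| = (p : ℤ) * B * |s| := by
        have : A = -((p : ℤ) * B * s) := by linarith
        rw [this, abs_neg, abs_mul, abs_of_pos (by positivity : (0:ℤ) < (p:ℤ) * B)]
      have h3 : (p : ℤ) * B ≤ (p : ℤ) * B * |s| :=
        le_mul_of_one_le_right (by positivity) h1
      linarith
    have hδ0 : ∀ j, δ j = 0 := by
      apply base_unique d B δ hB
      · intro j
        calc |δ j| ≤ (N : ℤ) - 1 := hδbound j
          _ < B := by omega
      · rw [← hs, hs0]
    funext j
    have := hδ0 j
    rw [hδ] at this
    simp only at this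
    omega
  · -- no d_i divisible by p
    intro i hdvd
    apply hugood i
    have hcast : ((∑ j, ((fun j => uz j + ((p : ℤ) * B) * B ^ (j : ℕ)) j) * v i j : ℤ) : ZMod p) = 0 :=
      (ZMod.intCast_zmod_eq_zero_iff_dvd _ p).mpr hdvd
    rw [← hcast]
    push_cast
    apply Finset.sum_congr rfl
    intro j _
    rw [← huzcast j]
    rw [ZMod.natCast_self]
    ring
end
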